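/- arXiv:1906.10299 — 4 statements merged into one kernel-verified Lean document; each statement's English description precedes it below -/
import Mathlib

section
/- Let a : ℕ → ℕ satisfy a(0) = 1, a(1) = 2, a(n) = 4·a(n-1) - 2·a(n-2) for n ≥ 2, and define t(n) = ∑_{k=0}^{n} 2^k · a(n-k). Then t(n) = ((2 + √2)^{n+1} - (2 - √2)^{n+1}) / (2√2). -/
open Real Finset

theorem stmt_1 (a : ℕ → ℕ) (h0 : a 0 = 1) (h1 : a 1 = 2)
    (hrec : ∀ n, (a (n + 2) : ℝ) = 4 * a (n + 1) - 2 * a n)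
    (t : ℕ → ℝ) (ht : ∀ n, t n = ∑ k ∈ range (n + 1), (2 : ℝ) ^ k * a (n - k)) :
    ∀ n, t n = ((2 + Real.sqrt 2) ^ (n + 1) - (2 - Real.sqrt 2) ^ (n + 1)) / (2 * Real.sqrt 2) := by
  set s := Real.sqrt 2 with hs
  have hs2 : s ^ 2 = 2 := Real.sq_sqrt (by norm_num)
  have hspos : 0 < s := Real.sqrt_pos.mpr (by norm_num)
  have hsne : (2 : ℝ) * s ≠ 0 := by positivity
  -- closed form for a
  have ha : ∀ n, (a n : ℝ) = ((2 + s) ^ n + (2 - s) ^ n) / 2 := by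
    have key : ∀ n, (a n : ℝ) = ((2 + s) ^ n + (2 - s) ^ n) / 2 ∧
        (a (n + 1) : ℝ) = ((2 + s) ^ (n + 1) + (2 - s) ^ (n + 1)) / 2 := by
      intro n
      induction n with
      | zero => exact ⟨by simp [h0], by simp [h1]⟩
      | succ k ih =>
        refine ⟨ih.2, ?_⟩
        rw [hrec k, ih.1, ih.2]
        linear_combination (-((2 + s) ^ k + (2 - s) ^ k) / 2) * hs2
    exact fun n => (key n).1
  -- recurrence for t
  have htrec : ∀ n, t (n + 1) = 2 * t n + a (n + 1) := by
    intro n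
    rw [ht (n + 1), ht n, Finset.sum_range_succ']
    simp only [Nat.succ_sub_succ]
    rw [Finset.mul_sum]
    congr 1
    · exact Finset.sum_congr rfl fun k _ => by ring
    · simp
  intro n
  induction n with
  | zero =>
    rw [ht 0]
    simp [h0]
    field_simp
    ring
  | succ k ih =>
    rw [htrec k, ih, ha (k + 1)]
    field_simp
    ring
end

section
/- Let a(n) = ((2 - √2)^n + (2 + √2)^n)/2 and t(n) = ((2 + √2)^{n+1} - (2 - √2)^{n+1})/(2√2). Then lim_{n→∞} a(n)/t(n) = √2/(2+√2). -/
open Real Filter Topology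

theorem stmt_2 (a t : ℕ → ℝ)
    (ha : ∀ n, a n = ((2 - Real.sqrt 2) ^ n + (2 + Real.sqrt 2) ^ n) / 2)
    (ht : ∀ n, t n = ((2 + Real.sqrt 2) ^ (n + 1) - (2 - Real.sqrt 2) ^ (n + 1)) / (2 * Real.sqrt 2)) :
    Tendsto (fun n => a n / t n) atTop (nhds (Real.sqrt 2 / (2 + Real.sqrt 2))) := by
  set s := Real.sqrt 2 with hs
  have hs2 : s ^ 2 = 2 := Real.sq_sqrt (by norm_num)
  have hs0 : 0 < s := Real.sqrt_pos.mpr (by norm_num)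
  have hs1 : 1 < s := by nlinarith
  have hslt2 : s < 2 := by nlinarith
  have hcpos : (0:ℝ) < 2 + s := by linarith
  have hbpos : (0:ℝ) < 2 - s := by linarith
  set r : ℝ := (2 - s) / (2 + s) with hr
  have hr0 : 0 ≤ r := le_of_lt (div_pos hbpos hcpos)
  have hr1 : r < 1 := by
    rw [hr, div_lt_one hcpos]; linarith
  have hrt : Tendsto (fun n => r ^ n) atTop (nhds 0) :=
    tendsto_pow_atTop_nhds_zero_of_lt_one hr0 hr1
  have hcne : ∀ n : ℕ, ((2 + s) ^ n : ℝ) ≠ 0 := fun n => pow_ne_zero n (ne_of_gt hcpos)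
  have hA : Tendsto (fun n => a n / (2 + s) ^ n) atTop (nhds (1 / 2)) := by
    have heq : (fun n => a n / (2 + s) ^ n) = fun n => (r ^ n + 1) / 2 := by
      funext n
      rw [ha, hr, div_pow]
      field_simp
    rw [heq]
    have h1 : Tendsto (fun n => (r ^ n + 1) / 2) atTop (nhds ((0 + 1) / 2)) :=
      (hrt.add tendsto_const_nhds).div_const 2
    simpa using h1
  have hT : Tendsto (fun n => t n / (2 + s) ^ n) atTop (nhds ((2 + s) / (2 * s))) := by
    have heq : (fun n => t n / (2 + s) ^ n) = fun n => ((2 + s) - (2 - s) * r ^ n) / (2 * s) := by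
      funext n
      rw [ht, hr, div_pow, pow_succ, pow_succ]
      field_simp
    rw [heq]
    have h1 : Tendsto (fun n => (2 + s) - (2 - s) * r ^ n) atTop (nhds ((2 + s) - (2 - s) * 0)) :=
      tendsto_const_nhds.sub (tendsto_const_nhds.mul hrt)
    have := h1.div_const (2 * s)
    simpa using this
  have hTne : ((2 + s) / (2 * s) : ℝ) ≠ 0 := by positivity
  have hdiv := hA.div hT hTne
  have hdiv2 : Tendsto (fun n => a n / t n) atTop (nhds (1 / 2 / ((2 + s) / (2 * s)))) := by
    refine hdiv.congr fun n => ?_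
    simp only [Pi.div_apply]
    rw [div_div_div_cancel_right₀]
    exact hcne n
  have hsne : s ≠ 0 := ne_of_gt hs0
  have hcne' : (2 + s) ≠ 0 := ne_of_gt hcpos
  have hval : (1:ℝ) / 2 / ((2 + s) / (2 * s)) = s / (2 + s) := by
    rw [div_div_div_eq]
    rw [div_eq_div_iff (by positivity) (by positivity)]
    ring
  rw [← hval]
  exact hdiv2
end

section
/- Let a : ℕ → ℝ satisfy a(0)=1, a(1)=2, a(n)=4a(n-1)-2a(n-2), and t(n) = ∑_{k=0}^n 2^k a(n-k). Then a(n)/t(n) is strictly decreasing in n and lim a(n)/t(n) = √2 - 1. -/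
open Real Finset Filter Topology

theorem stmt_6 (a : ℕ → ℝ) (h0 : a 0 = 1) (h1 : a 1 = 2)
    (hrec : ∀ n, a (n + 2) = 4 * a (n + 1) - 2 * a n)
    (t : ℕ → ℝ) (ht : ∀ n, t n = ∑ k ∈ range (n + 1), (2 : ℝ) ^ k * a (n - k)) :
    StrictAnti (fun n => a n / t n) ∧
      Tendsto (fun n => a n / t n) atTop (nhds (Real.sqrt 2 - 1)) := by
  set s := Real.sqrt 2 with hsdef
  have hs2 : s * s = 2 := Real.mul_self_sqrt (by norm_num)
  have hs0 : 0 < s := Real.sqrt_pos.mpr (by norm_num)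
  have hs1 : 1 < s := by nlinarith
  have hslt2 : s < 2 := by nlinarith
  set α : ℝ := 2 + s with hαdef
  set β : ℝ := 2 - s with hβdef
  have hα : 0 < α := by positivity
  have hβ : 0 < β := by rw [hβdef]; linarith
  have hβα : β < α := by rw [hαdef, hβdef]; linarith
  -- closed form for a
  have ha : ∀ n, a n = (α ^ n + β ^ n) / 2 := by
    have key : ∀ n, a n = (α ^ n + β ^ n) / 2 ∧ a (n + 1) = (α ^ (n + 1) + β ^ (n + 1)) / 2 := by
      intro n
      induction n with
      | zero =>
        constructor
        · rw [h0]; norm_num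
        · rw [pow_one, pow_one, h1, hαdef, hβdef]; ring
      | succ n ih =>
        refine ⟨ih.2, ?_⟩
        rw [hrec, ih.1, ih.2]
        have hα2 : α * α = 4 * α - 2 := by rw [hαdef]; nlinarith
        have hβ2 : β * β = 4 * β - 2 := by rw [hβdef]; nlinarith
        linear_combination (α ^ n / 2) * hα2 + (β ^ n / 2) * hβ2 - (α ^ n + β ^ n) * hs2
    exact fun n => (key n).1
  -- recursion for t
  have trec : ∀ n, t (n + 1) = a (n + 1) + 2 * t n := by
    intro n
    rw [ht (n + 1), ht n, Finset.sum_range_succ']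
    simp only [Nat.succ_sub_succ, pow_zero, one_mul, Nat.sub_zero]
    rw [add_comm, Finset.mul_sum]
    congr 1
    exact Finset.sum_congr rfl (fun k _ => by ring)
  -- closed form for t
  have htc : ∀ n, t n = (α ^ (n + 1) - β ^ (n + 1)) / (2 * s) := by
    intro n
    induction n with
    | zero =>
      rw [ht, Finset.sum_range_one, h0]
      norm_num
      rw [eq_div_iff (by positivity), hαdef, hβdef]
      ring
    | succ n ih =>
      rw [trec, ih, ha]
      field_simp
      ring
  set r : ℝ := β / α with hrdef
  have hr0 : 0 < r := div_pos hβ hα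
  have hr1 : r < 1 := (div_lt_one hα).mpr hβα
  -- key formula
  have key : ∀ n, a n / t n = s * (1 + r ^ n) / (α - β * r ^ n) := by
    intro n
    have h1' : (0:ℝ) < α ^ n := pow_pos hα n
    have h2 : β ^ (n + 1) < α ^ (n + 1) := pow_lt_pow_left₀ hβα hβ.le (Nat.succ_ne_zero n)
    have htpos : 0 < t n := by
      rw [htc]
      exact div_pos (by linarith) (by positivity)
    have hd4 : 0 < α - β * r ^ n := by
      have hrn1 : r ^ n ≤ 1 := pow_le_one₀ hr0.le hr1.le
      nlinarith [pow_pos hr0 n]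
    rw [div_eq_div_iff htpos.ne' hd4.ne', ha n, htc n, hrdef, div_pow]
    field_simp
    ring
  constructor
  · apply strictAnti_nat_of_succ_lt
    intro n
    show a (n + 1) / t (n + 1) < a n / t n
    rw [key n, key (n + 1)]
    set x : ℝ := r ^ n with hxdef
    have hx0 : 0 < x := pow_pos hr0 n
    have hx1 : x ≤ 1 := pow_le_one₀ hr0.le hr1.le
    have hrx : r ^ (n + 1) = r * x := by rw [hxdef, pow_succ]; ring
    rw [hrx]
    have hrx1 : r * x ≤ 1 := by nlinarith
    have hd1 : 0 < α - β * (r * x) := by nlinarith [mul_le_mul_of_nonneg_left hrx1 hβ.le]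
    have hd2 : 0 < α - β * x := by nlinarith [mul_le_mul_of_nonneg_left hx1 hβ.le]
    rw [div_lt_div_iff₀ hd1 hd2]
    nlinarith [mul_pos (mul_pos hs0 (add_pos hα hβ)) (mul_pos hx0 (sub_pos.mpr hr1))]
  · have hrt : Tendsto (fun n : ℕ => r ^ n) atTop (nhds 0) :=
      tendsto_pow_atTop_nhds_zero_of_lt_one hr0.le hr1
    have hlim : Tendsto (fun n : ℕ => s * (1 + r ^ n) / (α - β * r ^ n)) atTop
        (nhds (s * (1 + 0) / (α - β * 0))) := by
      apply Tendsto.div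
      · exact (tendsto_const_nhds.add hrt).const_mul s
      · exact tendsto_const_nhds.sub (hrt.const_mul β)
      · rw [mul_zero, sub_zero]; positivity
    have heq : s * (1 + 0) / (α - β * 0) = s - 1 := by
      rw [mul_zero, sub_zero, add_zero, mul_one, div_eq_iff hα.ne', hαdef]
      nlinarith [hs2]
    rw [heq] at hlim
    exact hlim.congr (fun n => (key n).symm)
end

section
/- For the sequence a(k,n) with a(k,0)=1, a(k,1)=2, a(k,n)=(k+2)a(k,n-1)-k·a(k,n-2), and t(k,n) = ∑_{j=0}^n k^j · a(k,n-j), the limit lim_{n→∞} a(k,n)/t(k,n) exists and equals (α - k)/α where α = (k+2+√(k²+4))/2. -/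
open Real Finset Filter Topology

theorem stmt_17 (k : ℕ) (hk : 2 ≤ k) (a : ℕ → ℝ) (h0 : a 0 = 1) (h1 : a 1 = 2)
    (hrec : ∀ n, a (n + 2) = (k + 2) * a (n + 1) - k * a n)
    (t : ℕ → ℝ) (ht : ∀ n, t n = ∑ j ∈ range (n + 1), (k : ℝ) ^ j * a (n - j))
    (α : ℝ) (hα : α = ((k : ℝ) + 2 + Real.sqrt ((k : ℝ) ^ 2 + 4)) / 2) :
    Tendsto (fun n => a n / t n) atTop (nhds ((α - k) / α)) := by
  set K : ℝ := (k : ℝ) with hKdef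
  have hK2 : (2 : ℝ) ≤ K := by rw [hKdef]; exact_mod_cast hk
  set s : ℝ := Real.sqrt (K ^ 2 + 4) with hsdef
  have hs0 : 0 ≤ s := Real.sqrt_nonneg _
  have hs : s ^ 2 = K ^ 2 + 4 := Real.sq_sqrt (by positivity)
  have hsk : K < s := by nlinarith
  have hs2 : s < K + 2 := by nlinarith
  have hαroot : α ^ 2 = (K + 2) * α - K := by rw [hα]; nlinarith
  set β : ℝ := K + 2 - α with hβdef
  have hαk : K + 1 < α := by rw [hα]; linarith
  have hαpos : 0 < α := by linarith
  have hβpos : 0 < β := by rw [hβdef, hα]; linarith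
  have hmul : α * β = K := by rw [hβdef]; nlinarith
  have hβ1 : β < 1 := by nlinarith
  have hβroot : β ^ 2 = (K + 2) * β - K := by rw [hβdef]; nlinarith
  have hαβ : β < α := by linarith
  have hαβne : α - β ≠ 0 := by linarith
  have hαKne : α - K ≠ 0 := by linarith
  have hβKne : β - K ≠ 0 := by nlinarith
  have hαne : α ≠ 0 := ne_of_gt hαpos
  set A : ℝ := (2 - β) / (α - β) with hAdef
  set B : ℝ := (α - 2) / (α - β) with hBdef
  have hApos : 0 < A := by
    apply div_pos <;> linarith
  -- closed form for a
  have hclosed : ∀ n, a n = A * α ^ n + B * β ^ n := by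
    intro n
    induction n using Nat.twoStepInduction with
    | zero =>
      simp only [pow_zero, mul_one, h0, hAdef, hBdef, ← add_div]
      rw [show 2 - β + (α - 2) = α - β by ring, div_self hαβne]
    | one =>
      simp only [h1, hAdef, hBdef, pow_one]
      field_simp; ring
    | more n ih1 ih2 =>
      rw [hrec n, ih1, ih2]
      have e1 : α ^ (n + 2) = (K + 2) * α ^ (n + 1) - K * α ^ n := by
        have : α ^ (n + 2) = α ^ n * α ^ 2 := by ring
        rw [this, hαroot]; ring
      have e2 : β ^ (n + 2) = (K + 2) * β ^ (n + 1) - K * β ^ n := by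
        have : β ^ (n + 2) = β ^ n * β ^ 2 := by ring
        rw [this, hβroot]; ring
      rw [e1, e2]; ring
  -- recurrence for t
  have htrec : ∀ n, t (n + 1) = a (n + 1) + K * t n := by
    intro n
    rw [ht (n + 1), Finset.sum_range_succ', ht n, Finset.mul_sum]
    simp only [Nat.succ_sub_succ, pow_zero, one_mul, Nat.sub_zero, pow_succ]
    rw [add_comm]
    congr 1
    apply Finset.sum_congr rfl
    intro j _
    ring
  -- closed form for t
  set P : ℝ := A * α / (α - K) with hPdef
  set Q : ℝ := B * β / (β - K) with hQdef
  set R : ℝ := 1 - P - Q with hRdef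
  have hPpos : 0 < P := by
    apply div_pos
    · exact mul_pos hApos hαpos
    · linarith
  have hPne : P ≠ 0 := ne_of_gt hPpos
  have htclosed : ∀ n, t n = P * α ^ n + Q * β ^ n + R * K ^ n := by
    intro n
    induction n with
    | zero =>
      have : t 0 = 1 := by rw [ht 0]; simp [h0]
      rw [this, hRdef]; ring
    | succ n ih =>
      rw [htrec n, ih, hclosed (n + 1)]
      have eP : P * (α - K) = A * α := by
        rw [hPdef]; field_simp
      have eQ : Q * (β - K) = B * β := by
        rw [hQdef]; field_simp
      have : A * α ^ (n + 1) = P * (α - K) * α ^ n := by rw [eP]; ring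
      have h2 : B * β ^ (n + 1) = Q * (β - K) * β ^ n := by rw [eQ]; ring
      rw [this, h2]; ring
  -- rewrite the ratio
  set r : ℝ := β / α with hrdef
  set q : ℝ := K / α with hqdef
  have hr0 : 0 ≤ r := le_of_lt (div_pos hβpos hαpos)
  have hr1 : r < 1 := (div_lt_one hαpos).2 hαβ
  have hq0 : 0 ≤ q := le_of_lt (div_pos (by linarith) hαpos)
  have hq1 : q < 1 := (div_lt_one hαpos).2 (by linarith)
  have hkey : ∀ n, a n / t n = (A + B * r ^ n) / (P + Q * r ^ n + R * q ^ n) := by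
    intro n
    have hαn : (α : ℝ) ^ n ≠ 0 := pow_ne_zero _ hαne
    have hrα : r ^ n * α ^ n = β ^ n := by
      rw [hrdef, div_pow]; field_simp
    have hqα : q ^ n * α ^ n = K ^ n := by
      rw [hqdef, div_pow]; field_simp
    have e1 : a n = (A + B * r ^ n) * α ^ n := by
      rw [hclosed n, ← hrα]; ring
    have e2 : t n = (P + Q * r ^ n + R * q ^ n) * α ^ n := by
      rw [htclosed n, ← hrα, ← hqα]; ring
    rw [e1, e2, mul_div_mul_right _ _ hαn]
  have hrlim : Tendsto (fun n : ℕ => r ^ n) atTop (nhds 0) :=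
    tendsto_pow_atTop_nhds_zero_of_lt_one hr0 hr1
  have hqlim : Tendsto (fun n : ℕ => q ^ n) atTop (nhds 0) :=
    tendsto_pow_atTop_nhds_zero_of_lt_one hq0 hq1
  have hnum : Tendsto (fun n : ℕ => A + B * r ^ n) atTop (nhds A) := by
    have := tendsto_const_nhds (x := A) (f := atTop (α := ℕ)) |>.add
      ((tendsto_const_nhds (x := B) (f := atTop (α := ℕ))).mul hrlim)
    simpa using this
  have hden : Tendsto (fun n : ℕ => P + Q * r ^ n + R * q ^ n) atTop (nhds P) := by
    have := (tendsto_const_nhds (x := P) (f := atTop (α := ℕ)) |>.add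
      ((tendsto_const_nhds (x := Q) (f := atTop (α := ℕ))).mul hrlim)).add
      ((tendsto_const_nhds (x := R) (f := atTop (α := ℕ))).mul hqlim)
    simpa using this
  have hfinal : Tendsto (fun n => a n / t n) atTop (nhds (A / P)) := by
    exact Tendsto.congr (fun n => (hkey n).symm) (hnum.div hden hPne)
  have hval : A / P = (α - K) / α := by
    have hAne : A ≠ 0 := ne_of_gt hApos
    rw [hPdef, div_div_eq_mul_div]
    exact mul_div_mul_left _ _ hAne
  rw [show (α - (k : ℝ)) / α = A / P from hval.symm]
  exact hfinal
end
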